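/- Let U ⊆ ℝⁿ be bounded open, T > 0, and w ∈ C²,¹(U_T) ∩ C(closure U_T) satisfy w_t − Q̃w ≤ 0 in U_T, with Q̃v = [Δv − D²v(Dv,Dv)/(1+|Dv|²) + |Dv|²]/√(1+|Dv|²). Then max over closure(U_T) of w equals max over the parabolic boundary Γ_T of w. -/

import Mathlib

/-!
Perturb `w` to `v = w - ε t` with `ε > 0`. If `v` attained its maximum over the closed cylinder
at a point of `U × (0, T]`, then there `Dw = 0` and every `∂ᵢ²w ≤ 0`, so `Q̃ w ≤ 0`, while the
one-sided time derivative gives `w_t ≥ ε > 0`, contradicting `w_t ≤ Q̃ w`. So `v` is maximised on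
the parabolic boundary, whence `max w ≤ max_Γ w + ε T` for every `ε > 0`.
-/

open Real Set

/-- Partial derivative of `f` in the `i`-th coordinate direction. -/
noncomputable def pd {n : ℕ} (f : EuclideanSpace ℝ (Fin n) → ℝ) (i : Fin n)
    (x : EuclideanSpace ℝ (Fin n)) : ℝ :=
  fderiv ℝ f x (EuclideanSpace.single i 1)

/-- Squared norm of the gradient of `f` at `x`. -/
noncomputable def gradNormSq {n : ℕ} (f : EuclideanSpace ℝ (Fin n) → ℝ)
    (x : EuclideanSpace ℝ (Fin n)) : ℝ :=
  ∑ i, (pd f i x) ^ 2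

/-- The divergence of the relativistic heat flux `u Du / √(u² + |Du|²)`. -/
noncomputable def relDiv {n : ℕ} (u : EuclideanSpace ℝ (Fin n) → ℝ)
    (x : EuclideanSpace ℝ (Fin n)) : ℝ :=
  ∑ i, pd (fun y => u y * pd u i y / Real.sqrt ((u y) ^ 2 + gradNormSq u y)) i x

/-- The transformed quasilinear operator
`Q w = Δw − D²w(Dw,Dw)/(1+|Dw|²) + |Dw|²`. -/
noncomputable def Qop {n : ℕ} (w : EuclideanSpace ℝ (Fin n) → ℝ)
    (x : EuclideanSpace ℝ (Fin n)) : ℝ :=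
  (∑ i, pd (pd w i) i x)
    - (∑ i, ∑ j, pd (pd w i) j x * pd w i x * pd w j x) / (1 + gradNormSq w x)
    + gradNormSq w x

/-- The normalized operator `Q̃ w = Q w / √(1+|Dw|²)`. -/
noncomputable def Qtil {n : ℕ} (w : EuclideanSpace ℝ (Fin n) → ℝ)
    (x : EuclideanSpace ℝ (Fin n)) : ℝ :=
  Qop w x / Real.sqrt (1 + gradNormSq w x)

open Filter Topology

theorem IsLocalMax.deriv_deriv_nonpos {g : ℝ → ℝ} {a : ℝ} (h : IsLocalMax g a)
    (hc : ContinuousAt g a) : deriv (deriv g) a ≤ 0 := by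
  by_contra! hpos
  have hmin : IsLocalMin g a := isLocalMin_of_deriv_deriv_pos hpos h.deriv_eq_zero hc
  have hconst : g =ᶠ[𝓝 a] fun _ => g a :=
    (h.and hmin).mono fun _ hx => le_antisymm hx.1 hx.2
  have : deriv (deriv g) a = 0 := by
    rw [hconst.deriv.deriv_eq, deriv_const', deriv_const']
  exact hpos.ne' this

theorem IsLocalMax.fderiv_fderiv_apply_nonpos {E : Type*} [NormedAddCommGroup E]
    [NormedSpace ℝ E] {f : E → ℝ} {x v : E} (h : IsLocalMax f x)
    (hf : ∀ᶠ y in 𝓝 x, DifferentiableAt ℝ f y)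
    (hf' : DifferentiableAt ℝ (fun y => fderiv ℝ f y v) x) :
    fderiv ℝ (fun y => fderiv ℝ f y v) x v ≤ 0 := by
  set L : ℝ → E := fun s => x + s • v
  have hL : ∀ s, HasDerivAt L v s := fun s => by
    simpa only [id, one_smul] using ((hasDerivAt_id s).smul_const v).const_add x
  have hLx : L 0 = x := by simp [L]
  rw [← hLx] at h hf hf' ⊢
  have hderiv : deriv (f ∘ L) =ᶠ[𝓝 0] fun s => fderiv ℝ f (L s) v := by
    filter_upwards [(hL 0).continuousAt.eventually hf] with s hs
    exact (hs.hasFDerivAt.comp_hasDerivAt s (hL s)).deriv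
  have hsecond := hf'.hasFDerivAt.comp_hasDerivAt 0 (hL 0)
  have hcont := hf.self_of_nhds.continuousAt.comp (hL 0).continuousAt
  calc _ = deriv (deriv (f ∘ L)) 0 := by rw [hderiv.deriv_eq]; exact hsecond.deriv.symm
    _ ≤ 0 := (h.comp_continuous (hL 0).continuousAt).deriv_deriv_nonpos hcont

theorem IsLocalMaxOn.nonneg_of_hasDerivAt_Iic {f : ℝ → ℝ} {t d : ℝ}
    (h : IsLocalMaxOn f (Iic t) t) (hf : HasDerivAt f d t) : 0 ≤ d := by
  have hmem : (-1 : ℝ) ∈ posTangentConeAt (Iic t) t :=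
    mem_posTangentConeAt_of_segment_subset
      ((convex_Iic t).segment_subset self_mem_Iic (by simp))
  simpa using h.hasFDerivWithinAt_nonpos hf.hasDerivWithinAt.hasFDerivWithinAt hmem

theorem Qtil_nonpos_of_isLocalMax {n : ℕ} {f : EuclideanSpace ℝ (Fin n) → ℝ}
    {x : EuclideanSpace ℝ (Fin n)} (hf : ContDiffAt ℝ 2 f x) (h : IsLocalMax f x) :
    Qtil f x ≤ 0 := by
  have hpd : ∀ i, pd f i x = 0 := by simp [pd, h.fderiv_eq_zero]
  have hgrad : gradNormSq f x = 0 := by simp [gradNormSq, hpd]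
  have hdiff : ∀ᶠ y in 𝓝 x, DifferentiableAt ℝ f y :=
    (hf.eventually (by simp)).mono fun _ hy => hy.differentiableAt (by simp)
  have hdiff' : DifferentiableAt ℝ (fderiv ℝ f) x :=
    (hf.fderiv_right (m := 1) (by norm_num)).differentiableAt one_ne_zero
  have hsecond : ∀ i, pd (pd f i) i x ≤ 0 := fun i =>
    h.fderiv_fderiv_apply_nonpos hdiff (hdiff'.clm_apply (differentiableAt_const _))
  simpa [Qtil, Qop, hpd, hgrad] using Finset.sum_nonpos fun i _ => hsecond i

theorem csSup_eq_csSup_of_subset_of_forall_le_add {s t : Set ℝ} (hts : t ⊆ s)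
    (hs : BddAbove s) (h : ∀ x ∈ s, ∀ δ > 0, ∃ y ∈ t, x ≤ y + δ) : sSup s = sSup t := by
  rcases s.eq_empty_or_nonempty with rfl | ⟨x, hx⟩
  · rw [subset_empty_iff.mp hts]
  have ht : t.Nonempty := by
    obtain ⟨y, hy, -⟩ := h x hx 1 one_pos
    exact ⟨y, hy⟩
  refine le_antisymm (csSup_le ⟨x, hx⟩ fun x hx => le_of_forall_pos_le_add fun δ hδ => ?_)
    (csSup_le_csSup hs ht hts)
  obtain ⟨y, hy, hxy⟩ := h x hx δ hδ
  exact hxy.trans (add_le_add_left (le_csSup (hs.mono hts) hy) δ)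

section Subsolution

variable {n : ℕ} {U : Set (EuclideanSpace ℝ (Fin n))} {T : ℝ}
  {w : EuclideanSpace ℝ (Fin n) → ℝ → ℝ}

theorem not_isMaxOn_sub_mul_of_subsolution {ε t : ℝ} {x : EuclideanSpace ℝ (Fin n)}
    (hU : IsOpen U) (hε : 0 < ε) (hx : x ∈ U) (ht : t ∈ Ioc 0 T)
    (hwx : ContDiffAt ℝ 2 (fun y => w y t) x) (hwt : DifferentiableAt ℝ (w x) t)
    (hsub : deriv (w x) t - Qtil (fun y => w y t) x ≤ 0) :
    ¬ IsMaxOn (fun q => w q.1 q.2 - ε * q.2) (U ×ˢ Ioc 0 T) (x, t) := by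
  intro hmax
  have hspace : IsLocalMax (fun y => w y t) x := by
    filter_upwards [hU.mem_nhds hx] with y hy
    have : w y t - ε * t ≤ w x t - ε * t := hmax (mk_mem_prod hy ht)
    linarith
  have htime : IsLocalMaxOn (fun s => w x s - ε * s) (Iic t) t := by
    filter_upwards [Ioc_mem_nhdsLE ht.1] with s hs
    exact hmax (mk_mem_prod hx ⟨hs.1, hs.2.trans ht.2⟩)
  have hderiv := hwt.hasDerivAt.sub ((hasDerivAt_id t).const_mul ε)
  have hdt := htime.nonneg_of_hasDerivAt_Iic hderiv
  have hQ := Qtil_nonpos_of_isLocalMax hwx hspace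
  simp only [mul_one] at hdt
  linarith

theorem exists_mem_parabolicBoundary_le_add (hU : IsOpen U) (hbdd : Bornology.IsBounded U)
    (hT : 0 < T) (hwx : ∀ t ∈ Ioc 0 T, ContDiffOn ℝ 2 (fun y => w y t) U)
    (hwt : ∀ x ∈ U, ∀ t ∈ Ioc 0 T, DifferentiableAt ℝ (w x) t)
    (hwc : ContinuousOn (fun q => w q.1 q.2) (closure (U ×ˢ Ioc 0 T)))
    (hsub : ∀ x ∈ U, ∀ t ∈ Ioc 0 T, deriv (w x) t - Qtil (fun y => w y t) x ≤ 0)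
    {q : EuclideanSpace ℝ (Fin n) × ℝ} (hq : q ∈ closure (U ×ˢ Ioc 0 T)) {δ : ℝ} (hδ : 0 < δ) :
    ∃ p ∈ closure (U ×ˢ Ioc 0 T) \ U ×ˢ Ioc 0 T, w q.1 q.2 ≤ w p.1 p.2 + δ := by
  have hK : IsCompact (closure (U ×ˢ Ioc 0 T)) :=
    (hbdd.prod (Metric.isBounded_Ioc 0 T)).isCompact_closure
  have htime : ∀ p ∈ closure (U ×ˢ Ioc 0 T), p.2 ∈ Icc 0 T := fun p hp => by
    rw [closure_prod_eq, closure_Ioc hT.ne] at hp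
    exact hp.2
  have hε : 0 < δ / T := div_pos hδ hT
  obtain ⟨p, hpK, hpmax⟩ := hK.exists_isMaxOn ⟨q, hq⟩
    (hwc.sub (continuous_const.mul continuous_snd).continuousOn)
  have hp : p ∉ U ×ˢ Ioc 0 T := fun ⟨hx, ht⟩ =>
    not_isMaxOn_sub_mul_of_subsolution hU hε hx ht ((hwx _ ht).contDiffAt (hU.mem_nhds hx))
      (hwt _ hx _ ht) (hsub _ hx _ ht) (hpmax.on_subset subset_closure)
  refine ⟨p, ⟨hpK, hp⟩, ?_⟩
  have hvp : w q.1 q.2 - δ / T * q.2 ≤ w p.1 p.2 - δ / T * p.2 := hpmax hq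
  have hqT := (htime q hq).2
  have hp0 := (htime p hpK).1
  calc w q.1 q.2 ≤ w p.1 p.2 + δ / T * (q.2 - p.2) := by linarith
    _ ≤ w p.1 p.2 + δ / T * T := by gcongr; linarith
    _ = w p.1 p.2 + δ := by field_simp

end Subsolution

/-- weak maximum principle: a subsolution of `w_t = Q̃ w`
attains its maximum over the closed parabolic cylinder on the parabolic
boundary. -/
theorem stmt17 {n : ℕ} (U : Set (EuclideanSpace ℝ (Fin n)))
    (hU : IsOpen U) (hbdd : Bornology.IsBounded U) (T : ℝ) (hT : 0 < T)
    (w : EuclideanSpace ℝ (Fin n) → ℝ → ℝ)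
    (hwx : ∀ t ∈ Set.Ioc 0 T, ContDiffOn ℝ 2 (fun y => w y t) U)
    (hwt : ∀ x ∈ U, ∀ t ∈ Set.Ioc 0 T, DifferentiableAt ℝ (w x) t)
    (hwc : ContinuousOn (fun q : EuclideanSpace ℝ (Fin n) × ℝ => w q.1 q.2)
      (closure (U ×ˢ Set.Ioc 0 T)))
    (hsub : ∀ x ∈ U, ∀ t ∈ Set.Ioc 0 T,
        deriv (w x) t - Qtil (fun y => w y t) x ≤ 0) :
    sSup ((fun q : EuclideanSpace ℝ (Fin n) × ℝ => w q.1 q.2) ''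
        closure (U ×ˢ Set.Ioc 0 T))
      = sSup ((fun q : EuclideanSpace ℝ (Fin n) × ℝ => w q.1 q.2) ''
        (closure (U ×ˢ Set.Ioc 0 T) \ U ×ˢ Set.Ioc 0 T)) := by
  have hK : IsCompact (closure (U ×ˢ Ioc 0 T)) :=
    (hbdd.prod (Metric.isBounded_Ioc 0 T)).isCompact_closure
  refine csSup_eq_csSup_of_subset_of_forall_le_add (image_mono sdiff_subset)
    (hK.image_of_continuousOn hwc).bddAbove ?_
  rintro _ ⟨q, hq, rfl⟩ δ hδ
  obtain ⟨p, hp, hle⟩ := exists_mem_parabolicBoundary_le_add hU hbdd hT hwx hwt hwc hsub hq hδ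
  exact ⟨_, mem_image_of_mem _ hp, hle⟩
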